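/- For every positive integer n with n ≡ 0 or 2 (mod 8) and n ≥ 8, there exists a 2-regular 2-D (3×n,3,1)-OOC with Υ(3,0,n,2,3) = 3(n−2)/2 codewords. -/
import Mathlib


/-- The cyclic shift of a codeword `B ⊆ I_m × Z_n` by `τ`. -/
def OOCshift {m n : ℕ} (B : Finset (Fin m × ZMod n)) (τ : ZMod n) :
    Finset (Fin m × ZMod n) :=
  B.image fun p => (p.1, p.2 + τ)

/-- A two-dimensional `(m × n, k, lam)` optical orthogonal code: a family of
`k`-element codewords of `I_m × Z_n` with auto- and cross-correlation at most `lam`. -/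
def IsOOC (m n k lam : ℕ) (C : Finset (Finset (Fin m × ZMod n))) : Prop :=
  (∀ A ∈ C, A.card = k) ∧
  (∀ A ∈ C, ∀ τ : ZMod n, τ ≠ 0 → (A ∩ OOCshift A τ).card ≤ lam) ∧
  (∀ A ∈ C, ∀ B ∈ C, A ≠ B → ∀ τ : ZMod n, (A ∩ OOCshift B τ).card ≤ lam)

/-- The multiset `Δ_{ij}(C)` of all (pure and mixed) `(i,j)`-differences of the family `C`. -/
def Delta {m n : ℕ} (i j : Fin m) (C : Finset (Finset (Fin m × ZMod n))) :
    Multiset (ZMod n) :=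
  ∑ B ∈ C, (((B ×ˢ B).filter fun p => p.1 ≠ p.2 ∧ p.1.1 = i ∧ p.2.1 = j).val.map
      fun p => p.1.2 - p.2.2)

/-- A `g`-regular 2-D `([m : r] × n, k, 1)`-OOC with hole `R × Z_n` (`r = R.card`):
for `{i,j} ⊄ R` the multiset `Δ_{ij}(C)` is exactly `Z_n \ H` (each element once), where
`H = {z : g • z = 0}` is the subgroup of order `g` of `Z_n`, and `Δ_{ij}(C) = ∅` otherwise. -/
def IsGRegOOC {m n : ℕ} (k g : ℕ) (R : Finset (Fin m))
    (C : Finset (Finset (Fin m × ZMod n))) : Prop :=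
  (∀ A ∈ C, A.card = k) ∧
  ∀ i j : Fin m, ∀ z : ZMod n,
    Multiset.count z (Delta i j C) =
      if i ∈ R ∧ j ∈ R then 0 else if g • z = 0 then 0 else 1

/- ------------------- auxiliary lemmas ------------------------- -/

section Aux

variable {n : ℕ}

lemma zmod_cast_inj [NeZero n] {a b : ℕ} (ha : a < n) (hb : b < n) :
    (a : ZMod n) = (b : ZMod n) ↔ a = b := by
  constructor
  · intro h
    have := congrArg ZMod.val h
    rwa [ZMod.val_cast_of_lt ha, ZMod.val_cast_of_lt hb] at this
  · rintro rfl; rfl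

lemma zmod_cast_ne [NeZero n] {a b : ℕ} (ha : a < n) (hb : b < n) (h : a ≠ b) :
    (a : ZMod n) ≠ (b : ZMod n) := fun h' => h ((zmod_cast_inj ha hb).mp h')

lemma zmod_cast_ne_zero [NeZero n] {a : ℕ} (h1 : 0 < a) (h2 : a < n) :
    (a : ZMod n) ≠ 0 := by
  have := zmod_cast_ne (n := n) h2 (Nat.pos_of_ne_zero (NeZero.ne n)) (by omega)
  simpa using this

lemma zmod_neg_cast [NeZero n] {a : ℕ} (h : a ≤ n) :
    -((a : ℕ) : ZMod n) = ((n - a : ℕ) : ZMod n) := by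
  rw [neg_eq_iff_add_eq_zero, ← Nat.cast_add, show a + (n - a) = n by omega,
    ZMod.natCast_self]

lemma zmod_two_smul_eq_zero {t : ℕ} [NeZero n] (htn : n = 2 * t) (ht : 0 < t) (z : ZMod n) :
    2 • z = 0 ↔ z = 0 ∨ z = ((t : ℕ) : ZMod n) := by
  have hzv : ((z.val : ℕ) : ZMod n) = z := by rw [ZMod.natCast_val, ZMod.cast_id]
  constructor
  · intro h
    rw [two_nsmul, ← hzv, ← Nat.cast_add, ZMod.natCast_eq_zero_iff] at h
    have hv : z.val < n := ZMod.val_lt z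
    obtain ⟨c, hc⟩ := h
    rcases c with _ | _ | c
    · left
      have : z.val = 0 := by omega
      rw [← hzv, this, Nat.cast_zero]
    · right
      have : z.val = t := by omega
      rw [← hzv, this]
    · exfalso
      have h2 : n * 2 ≤ n * (c + 1 + 1) := Nat.mul_le_mul_left n (by omega)
      generalize hw : n * (c + 1 + 1) = w at hc h2
      omega
  · rintro (rfl | rfl)
    · simp
    · rw [two_nsmul, ← Nat.cast_add, show t + t = n by omega, ZMod.natCast_self]

lemma count_map_range {α : Type*} [DecidableEq α] (m : ℕ) (X : ℕ → α) (z : α) :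
    Multiset.count z ((Multiset.range m).map X) =
      ∑ k ∈ Finset.range m, if z = X k then 1 else 0 := by
  rw [Multiset.count_map, ← Finset.range_val, ← Finset.filter_val, ← Finset.card_def,
    Finset.card_filter]

lemma count_lemma (n t m : ℕ) (htn : n = 2 * t) (ht : 2 ≤ t) (hm : 2 * m = n - 2)
    (f g : ℕ → ℕ)
    (hf : ∀ k, k < m → (1 ≤ f k ∧ f k < n ∧ f k ≠ t) ∧ (1 ≤ g k ∧ g k < n ∧ g k ≠ t))
    (hinj : ∀ k, k < m → ∀ k', k' < m →
      (f k = f k' → k = k') ∧ (g k = g k' → k = k') ∧ f k ≠ g k')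
    (z : ZMod n) :
    Multiset.count z ((Multiset.range m).map (fun k => ((f k : ℕ) : ZMod n))
        + (Multiset.range m).map (fun k => ((g k : ℕ) : ZMod n))) =
      if z = 0 ∨ z = ((t : ℕ) : ZMod n) then 0 else 1 := by
  haveI : NeZero n := ⟨by omega⟩
  have htlt : t < n := by omega
  set M := (Multiset.range m).map (fun k => ((f k : ℕ) : ZMod n))
      + (Multiset.range m).map (fun k => ((g k : ℕ) : ZMod n)) with hM
  have hnodup : M.Nodup := by
    rw [hM, Multiset.nodup_add]
    refine ⟨Multiset.Nodup.map_on ?_ (Multiset.nodup_range m),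
      Multiset.Nodup.map_on ?_ (Multiset.nodup_range m), ?_⟩
    · intro x hx y hy h
      rw [Multiset.mem_range] at hx hy
      exact (hinj x hx y hy).1
        ((zmod_cast_inj ((hf x hx).1.2.1) ((hf y hy).1.2.1)).mp h)
    · intro x hx y hy h
      rw [Multiset.mem_range] at hx hy
      exact (hinj x hx y hy).2.1
        ((zmod_cast_inj ((hf x hx).2.2.1) ((hf y hy).2.2.1)).mp h)
    · rw [Multiset.disjoint_left]
      rintro a ha1 ha2
      obtain ⟨x, hx, rfl⟩ := Multiset.mem_map.mp ha1
      obtain ⟨y, hy, hxy⟩ := Multiset.mem_map.mp ha2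
      rw [Multiset.mem_range] at hx hy
      exact (hinj x hx y hy).2.2
        (((zmod_cast_inj ((hf y hy).2.2.1) ((hf x hx).1.2.1)).mp hxy).symm)
  have hmemM : ∀ z' ∈ M, z' ≠ 0 ∧ z' ≠ ((t : ℕ) : ZMod n) := by
    intro z' hz'
    rw [hM, Multiset.mem_add] at hz'
    rcases hz' with hz' | hz'
    · obtain ⟨x, hx, rfl⟩ := Multiset.mem_map.mp hz'
      rw [Multiset.mem_range] at hx
      have h := (hf x hx).1
      exact ⟨zmod_cast_ne_zero (by omega) h.2.1, zmod_cast_ne h.2.1 htlt h.2.2⟩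
    · obtain ⟨x, hx, rfl⟩ := Multiset.mem_map.mp hz'
      rw [Multiset.mem_range] at hx
      have h := (hf x hx).2
      exact ⟨zmod_cast_ne_zero (by omega) h.2.1, zmod_cast_ne h.2.1 htlt h.2.2⟩
  by_cases hz : z = 0 ∨ z = ((t : ℕ) : ZMod n)
  · rw [if_pos hz]
    refine Multiset.count_eq_zero_of_notMem ?_
    intro hmem
    rcases (hmemM z hmem) with ⟨h1, h2⟩
    tauto
  · rw [if_neg hz]
    push_neg at hz
    -- M as a finset equals univ \ {0, t}
    set T : Finset (ZMod n) := ⟨M, hnodup⟩ with hT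
    have hsub : T ⊆ Finset.univ \ {0, ((t : ℕ) : ZMod n)} := by
      intro x hx
      have := hmemM x hx
      simp [Finset.mem_sdiff, this.1, this.2]
    have hcard2 : ({0, ((t : ℕ) : ZMod n)} : Finset (ZMod n)).card = 2 := by
      rw [Finset.card_insert_of_notMem (by
        simp only [Finset.mem_singleton]
        exact fun h => zmod_cast_ne_zero (by omega) htlt h.symm), Finset.card_singleton]
    have hcardsd : (Finset.univ \ {0, ((t : ℕ) : ZMod n)} : Finset (ZMod n)).card = n - 2 := by
      rw [Finset.card_sdiff_of_subset (Finset.subset_univ _), hcard2, Finset.card_univ, ZMod.card]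
    have hcardT : T.card = n - 2 := by
      have h0 : T.card = Multiset.card M := rfl
      rw [h0, hM]
      simp only [Multiset.card_add, Multiset.card_map, Multiset.card_range]
      omega
    have hTeq : T = Finset.univ \ {0, ((t : ℕ) : ZMod n)} :=
      Finset.eq_of_subset_of_card_le hsub (by omega)
    have hzT : z ∈ T := by
      rw [hTeq]
      simp [hz.1, hz.2]
    exact Multiset.count_eq_one_of_mem hnodup hzT

lemma fin3_succ_ne (r : Fin 3) : r ≠ r + 1 := by fin_cases r <;> decide

lemma fin3_ind (i j : Fin 3) :
    (∑ r : Fin 3, (if i = r ∧ j = r then 1 else if i = r ∧ j = r + 1 then 1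
      else if i = r + 1 ∧ j = r then 1 else 0)) = 1 := by
  revert i j
  decide

lemma fin3_case_sum (i j : Fin 3) (V : ℕ) :
    (∑ r : Fin 3, (if i = r ∧ j = r then V else if i = r ∧ j = r + 1 then V
      else if i = r + 1 ∧ j = r then V else 0)) = V := by
  have h : ∀ r : Fin 3, (if i = r ∧ j = r then V else if i = r ∧ j = r + 1 then V
      else if i = r + 1 ∧ j = r then V else 0)
      = (if i = r ∧ j = r then 1 else if i = r ∧ j = r + 1 then 1
        else if i = r + 1 ∧ j = r then 1 else 0) * V := by
    intro r
    split_ifs <;> simp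
  rw [Finset.sum_congr rfl (fun r _ => h r), ← Finset.sum_mul, fin3_ind i j, one_mul]

lemma block_count {n : ℕ} (r i j : Fin 3) (a b : ZMod n) (hab : a ≠ b)
    (ha : a ≠ 0) (hb : b ≠ 0) (z : ZMod n) :
    Multiset.count z
      (((({(r, a), (r, b), (r + 1, 0)} : Finset (Fin 3 × ZMod n)) ×ˢ
          ({(r, a), (r, b), (r + 1, 0)} : Finset (Fin 3 × ZMod n))).filter
          fun p => p.1 ≠ p.2 ∧ p.1.1 = i ∧ p.2.1 = j).val.map
        fun p => p.1.2 - p.2.2) =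
      if i = r ∧ j = r then (if z = a - b then 1 else 0) + (if z = b - a then 1 else 0)
      else if i = r ∧ j = r + 1 then (if z = a then 1 else 0) + (if z = b then 1 else 0)
      else if i = r + 1 ∧ j = r then (if z = -a then 1 else 0) + (if z = -b then 1 else 0)
      else 0 := by
  have hr : r ≠ r + 1 := fin3_succ_ne r
  have h1 : ((r, a) : Fin 3 × ZMod n) ∉ ({(r, b), (r + 1, 0)} : Finset (Fin 3 × ZMod n)) := by
    simp only [Finset.mem_insert, Finset.mem_singleton, Prod.mk.injEq, not_or]
    exact ⟨fun h => hab h.2, fun h => hr h.1⟩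
  have h2 : ((r, b) : Fin 3 × ZMod n) ∉ ({(r + 1, 0)} : Finset (Fin 3 × ZMod n)) := by
    simp only [Finset.mem_singleton, Prod.mk.injEq, not_and]
    exact fun h => absurd h hr
  rw [Multiset.count_map, ← Finset.filter_val, Finset.filter_filter, ← Finset.card_def,
    Finset.card_filter, Finset.sum_product]
  simp only [Finset.sum_insert h1, Finset.sum_insert h2, Finset.sum_singleton]
  fin_cases r <;> fin_cases i <;> fin_cases j <;>
    simp [-Prod.mk_zero_zero, Prod.mk.injEq, hab, hab.symm, ha, hb, sub_zero, zero_sub,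
      Ne.symm ha, Ne.symm hb]

end Aux

/- ------------------- the abstract construction ------------------------- -/

theorem ooc_of_pairs (n t : ℕ) (htn : n = 2 * t) (ht : 2 ≤ t)
    (Fa Fb : ℕ → ℕ)
    (hab : ∀ k, k < t - 1 → 1 ≤ Fb k ∧ Fb k < Fa k ∧ Fa k < 2 * t
        ∧ Fa k ≠ t ∧ Fb k ≠ t ∧ Fa k - Fb k ≠ t)
    (hd : ∀ k k', k < t - 1 → k' < t - 1 → k ≠ k' →
        Fa k ≠ Fa k' ∧ Fa k ≠ Fb k' ∧ Fb k ≠ Fb k'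
        ∧ (Fa k - Fb k) ≠ (Fa k' - Fb k')
        ∧ (Fa k - Fb k) + (Fa k' - Fb k') ≠ 2 * t) :
    ∃ C : Finset (Finset (Fin 3 × ZMod n)),
      IsGRegOOC 3 2 (∅ : Finset (Fin 3)) C ∧ C.card = 3 * (t - 1) := by
  haveI : NeZero n := ⟨by omega⟩
  set m := t - 1 with hmdef
  -- basic nat facts
  have hFa_lt : ∀ k, k < m → Fa k < n := fun k hk => by
    have := (hab k hk).2.2.1; omega
  have hFb_lt : ∀ k, k < m → Fb k < n := fun k hk => by
    have h1 := (hab k hk).2.1; have h2 := (hab k hk).2.2.1; omega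
  have hFab_ne : ∀ k, k < m → ∀ k', k' < m → Fa k ≠ Fb k' := by
    intro k hk k' hk' h
    rcases eq_or_ne k k' with rfl | hne
    · have := (hab k hk).2.1; omega
    · exact (hd k k' hk hk' hne).2.1 h
  -- ZMod level distinctness
  have hABz : ∀ k, k < m → ∀ k', k' < m →
      ((Fa k : ℕ) : ZMod n) ≠ ((Fb k' : ℕ) : ZMod n) := fun k hk k' hk' =>
    zmod_cast_ne (hFa_lt k hk) (hFb_lt k' hk') (hFab_ne k hk k' hk')
  have hAAz : ∀ k, k < m → ∀ k', k' < m →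
      ((Fa k : ℕ) : ZMod n) = ((Fa k' : ℕ) : ZMod n) → k = k' := by
    intro k hk k' hk' h
    by_contra hne
    exact (hd k k' hk hk' hne).1 ((zmod_cast_inj (hFa_lt k hk) (hFa_lt k' hk')).mp h)
  have hA0 : ∀ k, k < m → ((Fa k : ℕ) : ZMod n) ≠ 0 := fun k hk =>
    zmod_cast_ne_zero (by have := (hab k hk).1; have := (hab k hk).2.1; omega) (hFa_lt k hk)
  have hB0 : ∀ k, k < m → ((Fb k : ℕ) : ZMod n) ≠ 0 := fun k hk =>
    zmod_cast_ne_zero (by have := (hab k hk).1; omega) (hFb_lt k hk)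
  -- the code
  set G : Fin 3 × ℕ → Finset (Fin 3 × ZMod n) :=
    fun p => {(p.1, ((Fa p.2 : ℕ) : ZMod n)), (p.1, ((Fb p.2 : ℕ) : ZMod n)), (p.1 + 1, 0)}
    with hG
  set I : Finset (Fin 3 × ℕ) := Finset.univ ×ˢ Finset.range m with hI
  have hmemI : ∀ p : Fin 3 × ℕ, p ∈ I ↔ p.2 < m := by
    intro p
    simp [hI, Finset.mem_product]
  have hGinj : ∀ p ∈ I, ∀ q ∈ I, G p = G q → p = q := by
    rintro ⟨r, k⟩ hp ⟨r', k'⟩ hq h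
    have hk : k < m := (hmemI _).mp hp
    have hk' : k' < m := (hmemI _).mp hq
    have h1 : ((r, ((Fa k : ℕ) : ZMod n)) : Fin 3 × ZMod n) ∈ G (r', k') := by
      rw [← h]; simp [hG]
    simp only [hG, Finset.mem_insert, Finset.mem_singleton, Prod.mk.injEq] at h1
    rcases h1 with ⟨hrr, hv⟩ | ⟨hrr, hv⟩ | ⟨hrr, hv⟩
    · have := hAAz k hk k' hk' hv
      simp [hrr, this]
    · exact absurd hv (hABz k hk k' hk')
    · exact absurd hv (hA0 k hk)
  refine ⟨I.image G, ⟨?_, ?_⟩, ?_⟩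
  · -- cardinalities of codewords
    intro A hA
    obtain ⟨⟨r, k⟩, hp, rfl⟩ := Finset.mem_image.mp hA
    have hk : k < m := (hmemI _).mp hp
    have hrr : r ≠ r + 1 := fin3_succ_ne r
    rw [hG]
    rw [Finset.card_insert_of_notMem (by
        simp only [Finset.mem_insert, Finset.mem_singleton, Prod.mk.injEq, not_or]
        exact ⟨fun h => hABz k hk k hk h.2, fun h => hrr h.1⟩),
      Finset.card_insert_of_notMem (by
        simp only [Finset.mem_singleton, Prod.mk.injEq, not_and]
        exact fun h => absurd h hrr),
      Finset.card_singleton]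
  · -- the difference condition
    intro i j z
    simp only [Finset.notMem_empty, false_and, if_false]
    rw [if_congr (zmod_two_smul_eq_zero htn (by omega) z) rfl rfl]
    simp only [Delta]
    rw [Finset.sum_image hGinj, Multiset.count_sum']
    -- auxiliary counting facts
    have hm2 : 2 * m = n - 2 := by omega
    have case1 : Multiset.count z
        ((Multiset.range m).map (fun k => ((Fa k : ℕ) : ZMod n))
          + (Multiset.range m).map (fun k => ((Fb k : ℕ) : ZMod n))) =
        if z = 0 ∨ z = ((t : ℕ) : ZMod n) then 0 else 1 := by
      refine count_lemma n t m htn ht hm2 Fa Fb ?_ ?_ z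
      · intro k hk
        have h := hab k hk
        exact ⟨⟨by omega, hFa_lt k hk, h.2.2.2.1⟩, ⟨h.1, hFb_lt k hk, h.2.2.2.2.1⟩⟩
      · intro k hk k' hk'
        refine ⟨?_, ?_, hFab_ne k hk k' hk'⟩
        · intro h; by_contra hne; exact (hd k k' hk hk' hne).1 h
        · intro h; by_contra hne; exact (hd k k' hk hk' hne).2.2.1 h
    have case2 : Multiset.count z
        ((Multiset.range m).map (fun k => ((Fa k : ℕ) : ZMod n) - ((Fb k : ℕ) : ZMod n))
          + (Multiset.range m).map
              (fun k => ((Fb k : ℕ) : ZMod n) - ((Fa k : ℕ) : ZMod n))) =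
        if z = 0 ∨ z = ((t : ℕ) : ZMod n) then 0 else 1 := by
      have e1 : (Multiset.range m).map
          (fun k => ((Fa k : ℕ) : ZMod n) - ((Fb k : ℕ) : ZMod n)) =
          (Multiset.range m).map (fun k => (((Fa k - Fb k : ℕ)) : ZMod n)) := by
        refine Multiset.map_congr rfl ?_
        intro k hk
        rw [Multiset.mem_range] at hk
        rw [Nat.cast_sub (le_of_lt (hab k hk).2.1)]
      have e2 : (Multiset.range m).map
          (fun k => ((Fb k : ℕ) : ZMod n) - ((Fa k : ℕ) : ZMod n)) =
          (Multiset.range m).map (fun k => (((2 * t - (Fa k - Fb k) : ℕ)) : ZMod n)) := by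
        refine Multiset.map_congr rfl ?_
        intro k hk
        rw [Multiset.mem_range] at hk
        have hle := le_of_lt (hab k hk).2.1
        have h1 : ((Fb k : ℕ) : ZMod n) - ((Fa k : ℕ) : ZMod n)
            = -(((Fa k - Fb k : ℕ)) : ZMod n) := by
          rw [Nat.cast_sub hle]; ring
        rw [h1, zmod_neg_cast (show Fa k - Fb k ≤ n by
          have := (hab k hk).2.2.1; omega)]
        congr 1
        omega
      rw [e1, e2]
      refine count_lemma n t m htn ht hm2 _ _ ?_ ?_ z
      · intro k hk
        have h := hab k hk
        constructor
        · exact ⟨by omega, by omega, h.2.2.2.2.2⟩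
        · have h1 : 1 ≤ Fa k - Fb k := by omega
          have h2 : Fa k - Fb k < 2 * t := by omega
          exact ⟨by omega, by omega, by omega⟩
      · intro k hk k' hk'
        have h := hab k hk
        have h' := hab k' hk'
        refine ⟨?_, ?_, ?_⟩
        · intro heq; by_contra hne; exact (hd k k' hk hk' hne).2.2.2.1 heq
        · intro heq
          by_contra hne
          have h5 := (hd k k' hk hk' hne).2.2.2.1
          have h6 : Fa k - Fb k < 2 * t := by omega
          have h7 : Fa k' - Fb k' < 2 * t := by omega
          omega
        · rcases eq_or_ne k k' with rfl | hne
          · have : Fa k - Fb k ≠ t := h.2.2.2.2.2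
            have : Fa k - Fb k < 2 * t := by omega
            omega
          · have h5 := (hd k k' hk hk' hne).2.2.2.2
            have h7 : Fa k' - Fb k' < 2 * t := by omega
            omega
    have case3 : Multiset.count z
        ((Multiset.range m).map (fun k => -((Fa k : ℕ) : ZMod n))
          + (Multiset.range m).map (fun k => -((Fb k : ℕ) : ZMod n))) =
        if z = 0 ∨ z = ((t : ℕ) : ZMod n) then 0 else 1 := by
      have e1 : (Multiset.range m).map (fun k => -((Fa k : ℕ) : ZMod n)) =
          (Multiset.range m).map (fun k => (((2 * t - Fa k : ℕ)) : ZMod n)) := by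
        refine Multiset.map_congr rfl ?_
        intro k hk
        rw [Multiset.mem_range] at hk
        rw [zmod_neg_cast (le_of_lt (hFa_lt k hk))]
        congr 1
        omega
      have e2 : (Multiset.range m).map (fun k => -((Fb k : ℕ) : ZMod n)) =
          (Multiset.range m).map (fun k => (((2 * t - Fb k : ℕ)) : ZMod n)) := by
        refine Multiset.map_congr rfl ?_
        intro k hk
        rw [Multiset.mem_range] at hk
        rw [zmod_neg_cast (le_of_lt (hFb_lt k hk))]
        congr 1
        omega
      rw [e1, e2]
      refine count_lemma n t m htn ht hm2 _ _ ?_ ?_ z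
      · intro k hk
        have h := hab k hk
        have h1 : Fa k < 2 * t := h.2.2.1
        have h2 : 1 ≤ Fb k := h.1
        have h3 : Fb k < Fa k := h.2.1
        have h4 : Fa k ≠ t := h.2.2.2.1
        have h5 : Fb k ≠ t := h.2.2.2.2.1
        exact ⟨⟨by omega, by omega, by omega⟩, ⟨by omega, by omega, by omega⟩⟩
      · intro k hk k' hk'
        have h1 : Fa k < 2 * t := (hab k hk).2.2.1
        have h1' : Fa k' < 2 * t := (hab k' hk').2.2.1
        have h2' : Fb k' < 2 * t := by have := (hab k' hk').2.1; omega
        refine ⟨?_, ?_, ?_⟩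
        · intro heq
          by_contra hne
          have := (hd k k' hk hk' hne).1
          omega
        · intro heq
          by_contra hne
          have := (hd k k' hk hk' hne).2.2.1
          have h2 : Fb k < 2 * t := by have := (hab k hk).2.1; omega
          omega
        · intro heq
          have := hFab_ne k hk k' hk'
          omega
    -- rewrite each codeword contribution
    have key : ∀ p ∈ I, Multiset.count z
        (((G p ×ˢ G p).filter fun q => q.1 ≠ q.2 ∧ q.1.1 = i ∧ q.2.1 = j).val.map
          fun q => q.1.2 - q.2.2) =
        (if i = p.1 ∧ j = p.1 then
            (if z = ((Fa p.2 : ℕ) : ZMod n) - ((Fb p.2 : ℕ) : ZMod n) then 1 else 0)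
              + (if z = ((Fb p.2 : ℕ) : ZMod n) - ((Fa p.2 : ℕ) : ZMod n) then 1 else 0)
          else if i = p.1 ∧ j = p.1 + 1 then
            (if z = ((Fa p.2 : ℕ) : ZMod n) then 1 else 0)
              + (if z = ((Fb p.2 : ℕ) : ZMod n) then 1 else 0)
          else if i = p.1 + 1 ∧ j = p.1 then
            (if z = -((Fa p.2 : ℕ) : ZMod n) then 1 else 0)
              + (if z = -((Fb p.2 : ℕ) : ZMod n) then 1 else 0)
          else 0) := by
      rintro ⟨r, k⟩ hp
      have hk : k < m := (hmemI _).mp hp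
      exact block_count r i j _ _ (hABz k hk k hk) (hA0 k hk) (hB0 k hk) z
    set V : ℕ := if z = 0 ∨ z = ((t : ℕ) : ZMod n) then 0 else 1 with hV
    have key2 : ∀ r : Fin 3, (∑ k ∈ Finset.range m,
        (if i = r ∧ j = r then
            (if z = ((Fa k : ℕ) : ZMod n) - ((Fb k : ℕ) : ZMod n) then 1 else 0)
              + (if z = ((Fb k : ℕ) : ZMod n) - ((Fa k : ℕ) : ZMod n) then 1 else 0)
          else if i = r ∧ j = r + 1 then
            (if z = ((Fa k : ℕ) : ZMod n) then 1 else 0)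
              + (if z = ((Fb k : ℕ) : ZMod n) then 1 else 0)
          else if i = r + 1 ∧ j = r then
            (if z = -((Fa k : ℕ) : ZMod n) then 1 else 0)
              + (if z = -((Fb k : ℕ) : ZMod n) then 1 else 0)
          else 0)) =
        (if i = r ∧ j = r then V else if i = r ∧ j = r + 1 then V
          else if i = r + 1 ∧ j = r then V else 0) := by
      intro r
      by_cases h1 : i = r ∧ j = r
      · simp only [if_pos h1]
        rw [Finset.sum_add_distrib, ← count_map_range, ← count_map_range,
          ← Multiset.count_add, hV]
        exact case2
      · by_cases h2 : i = r ∧ j = r + 1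
        · simp only [if_neg h1, if_pos h2]
          rw [Finset.sum_add_distrib, ← count_map_range, ← count_map_range,
            ← Multiset.count_add, hV]
          exact case1
        · by_cases h3 : i = r + 1 ∧ j = r
          · simp only [if_neg h1, if_neg h2, if_pos h3]
            rw [Finset.sum_add_distrib, ← count_map_range, ← count_map_range,
              ← Multiset.count_add, hV]
            exact case3
          · simp only [if_neg h1, if_neg h2, if_neg h3, Finset.sum_const_zero]
    refine ((Finset.sum_congr rfl key).trans ?_)
    refine ((Finset.sum_product _ _ _).trans ?_)
    refine ((Finset.sum_congr rfl (fun r _ => key2 r)).trans ?_)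
    exact fin3_case_sum i j V
  · -- cardinality of the code
    rw [Finset.card_image_of_injOn hGinj, hI, Finset.card_product, Finset.card_univ,
      Finset.card_range]
    simp [Fintype.card_fin]

/- ------------------- the explicit pairings ------------------------- -/

def F0A (u k : ℕ) : ℕ :=
  if k ≤ 2*u - 2 then 8*u - 1 - k
  else if k = 2*u - 1 then 6*u
  else if k ≤ 3*u - 2 then 6*u - 1 - k
  else if k ≤ 4*u - 4 then 6*u - 3 - k
  else if k = 4*u - 3 then 2*u
  else 3*u

def F0B (u k : ℕ) : ℕ :=
  if k ≤ 2*u - 2 then 4*u + 1 + k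
  else if k = 2*u - 1 then 2*u - 1
  else if k ≤ 4*u - 4 then k - (2*u - 2)
  else if k = 4*u - 3 then 1
  else 3*u - 1

def F1A (u k : ℕ) : ℕ :=
  if k ≤ 2*u - 2 then 8*u - k
  else if k = 2*u - 1 then 6*u + 1
  else if k = 2*u then 8*u + 1
  else if k ≤ 3*u - 1 then 6*u + 1 - k
  else if k ≤ 4*u - 2 then 6*u - 1 - k
  else 3*u + 1

def F1B (u k : ℕ) : ℕ :=
  if k ≤ 2*u - 2 then 4*u + 2 + k
  else if k = 2*u - 1 then 2*u - 1
  else if k = 2*u then 2*u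
  else if k ≤ 4*u - 2 then k - 2*u
  else 3*u

def F8A (k : ℕ) : ℕ := if k = 0 then 2 else if k = 1 then 6 else 7
def F8B (k : ℕ) : ℕ := if k = 0 then 1 else if k = 1 then 3 else 5

/- ------------------- main theorem ------------------------- -/

set_option maxHeartbeats 2000000 in
theorem stmt_10 (n : ℕ) (hn : n % 8 = 0 ∨ n % 8 = 2) (hn8 : 8 ≤ n) :
    ∃ C : Finset (Finset (Fin 3 × ZMod n)),
      IsGRegOOC 3 2 (∅ : Finset (Fin 3)) C ∧ C.card = 3 * (n - 2) / 2 := by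
  rcases hn with h8 | h8
  · rcases eq_or_ne n 8 with rfl | hne
    · -- n = 8, t = 4
      obtain ⟨C, hC, hcard⟩ := ooc_of_pairs 8 4 (by norm_num) (by norm_num) F8A F8B
        (by intro k hk; interval_cases k <;> simp [F8A, F8B])
        (by intro k k' hk hk' hne; interval_cases k <;> interval_cases k' <;>
          simp_all [F8A, F8B])
      exact ⟨C, hC, by rw [hcard]⟩
    · -- n = 8u with u ≥ 2
      have hu : 2 ≤ n / 8 := by omega
      set u := n / 8 with hudef
      have hnu : n = 8 * u := by omega
      obtain ⟨C, hC, hcard⟩ := ooc_of_pairs n (4 * u) (by omega) (by omega)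
        (F0A u) (F0B u)
        (by
          intro k hk
          simp only [F0A, F0B]
          split_ifs <;> omega)
        (by
          intro k k' hk hk' hkk
          simp only [F0A, F0B]
          split_ifs <;> omega)
      refine ⟨C, hC, by rw [hcard]; omega⟩
  · -- n = 8u + 2 with u ≥ 1
    have hu : 1 ≤ n / 8 := by omega
    set u := n / 8 with hudef
    have hnu : n = 8 * u + 2 := by omega
    obtain ⟨C, hC, hcard⟩ := ooc_of_pairs n (4 * u + 1) (by omega) (by omega)
      (F1A u) (F1B u)
      (by
        intro k hk
        simp only [F1A, F1B]
        split_ifs <;> omega)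
      (by
        intro k k' hk hk' hkk
        simp only [F1A, F1B]
        split_ifs <;> omega)
    refine ⟨C, hC, by rw [hcard]; omega⟩
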